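/- arXiv:1708.09238 — 2 statements merged into one kernel-verified Lean document; each statement's English description precedes it below -/
import Mathlib

section
/- Given a 3-CNF formula ψ, construct graphs G_x and G_c as follows. G_x has a vertex (cluster) C(x) for each variable x and a vertex C(γ) for each clause γ, with C(γ) adjacent to the clusters of the three variables occurring in γ. In G_c, each variable cluster C(x) contains two cells (for literals x and ¬x), each clause cluster C(γ) contains three cells (one per literal of γ); each literal cell of a clause γ is adjacent to the corresponding literal cell of its variable's cluster and to all cells of the clusters of the other two variables of γ. Then ψ is satisfiable if and only if there exists a choice of exactly one cell from each cluster such that the subgraph of G_c induced by the chosen cells is isomorphic to G_x (via the map sending each chosen cell to its cluster). -/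
/-- A 3-clause over variables `Var`: three literals over pairwise distinct variables.
`var i` is the variable of the `i`-th literal and `pos i` its sign (`true` for a
positive literal). -/
structure ThreeClause (Var : Type*) where
  var : Fin 3 → Var
  pos : Fin 3 → Bool
  inj : Function.Injective var

/-- A truth assignment satisfies a clause if some literal evaluates to true. -/
def ThreeClause.Sat {Var : Type*} (γ : ThreeClause Var) (τ : Var → Bool) : Prop :=
  ∃ i : Fin 3, τ (γ.var i) = γ.pos i

section
variable {Var : Type*} {m : ℕ} (ψ : Fin m → ThreeClause Var)

/-- Clusters: one per variable, one per clause. -/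
abbrev Cluster (Var : Type*) (m : ℕ) := Var ⊕ Fin m

/-- Cells: each variable cluster contains two cells (one per sign of the literal),
each clause cluster contains three cells (one per literal of the clause). -/
abbrev Cell (Var : Type*) (m : ℕ) := (Var × Bool) ⊕ (Fin m × Fin 3)

/-- The cluster containing a given cell. -/
def clusterOf : Cell Var m → Cluster Var m
  | Sum.inl (x, _) => Sum.inl x
  | Sum.inr (j, _) => Sum.inr j

/-- The intersection graph `G_x`: a clause cluster is adjacent to the clusters of the
three variables occurring in the clause. -/
def adjX : Cluster Var m → Cluster Var m → Prop
  | Sum.inl x, Sum.inr j => ∃ i : Fin 3, (ψ j).var i = x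
  | Sum.inr j, Sum.inl x => ∃ i : Fin 3, (ψ j).var i = x
  | _, _ => False

/-- The cell graph `G_c`: the literal cell `(j, i)` of clause `γ = ψ j` is adjacent to
the corresponding literal cell of the cluster of its variable `γ.var i`, and to all
(i.e., both) cells of the clusters of the other two variables of `γ`. There are no
other edges. -/
def adjC : Cell Var m → Cell Var m → Prop
  | Sum.inr (j, i), Sum.inl (x, b) =>
      ((ψ j).var i = x ∧ b = (ψ j).pos i) ∨ (∃ i' : Fin 3, i' ≠ i ∧ (ψ j).var i' = x)
  | Sum.inl (x, b), Sum.inr (j, i) =>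
      ((ψ j).var i = x ∧ b = (ψ j).pos i) ∨ (∃ i' : Fin 3, i' ≠ i ∧ (ψ j).var i' = x)
  | _, _ => False

/-! A transversal is the same thing as a truth assignment (the cell chosen in each variable
cluster) together with a choice of one literal per clause (the cell chosen in each clause
cluster). The chosen cell of a clause is adjacent to both cells of the other two variables of
the clause, so the only constraint a skeleton imposes is the edge to the chosen literal's own
variable, and, the variables of a clause being distinct, that edge exists exactly when the
assignment makes the chosen literal true. Skeletons are therefore satisfying assignments
together with a true literal in every clause. -/

def skeletonOf (τ : Var → Bool) (f : Fin m → Fin 3) : Cluster Var m → Cell Var m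
  | Sum.inl x => Sum.inl (x, τ x)
  | Sum.inr j => Sum.inr (j, f j)

theorem clusterOf_skeletonOf (τ : Var → Bool) (f : Fin m → Fin 3) (k : Cluster Var m) :
    clusterOf (skeletonOf τ f k) = k := by
  cases k <;> rfl

theorem exists_eq_skeletonOf {s : Cluster Var m → Cell Var m}
    (hs : ∀ k, clusterOf (s k) = k) : ∃ τ f, s = skeletonOf τ f := by
  have hvar : ∀ x : Var, ∃ b, s (Sum.inl x) = Sum.inl (x, b) := by
    intro x
    have hx := hs (Sum.inl x)
    generalize s (Sum.inl x) = c at hx ⊢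
    rcases c with ⟨y, b⟩ | _ <;> cases hx
    exact ⟨b, rfl⟩
  have hclause : ∀ j : Fin m, ∃ i, s (Sum.inr j) = Sum.inr (j, i) := by
    intro j
    have hj := hs (Sum.inr j)
    generalize s (Sum.inr j) = c at hj ⊢
    rcases c with _ | ⟨j', i⟩ <;> cases hj
    exact ⟨i, rfl⟩
  choose τ hτ using hvar
  choose f hf using hclause
  exact ⟨τ, f, funext fun | Sum.inl x => hτ x | Sum.inr j => hf j⟩

theorem adjC_comm (c c' : Cell Var m) : adjC ψ c c' ↔ adjC ψ c' c := by
  rcases c with ⟨x, b⟩ | ⟨j, i⟩ <;> rcases c' with ⟨x', b'⟩ | ⟨j', i'⟩ <;> rfl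

theorem adjC_var_clause_iff (j : Fin m) (i i' : Fin 3) (b : Bool) :
    adjC ψ (Sum.inl ((ψ j).var i', b)) (Sum.inr (j, i)) ↔ (i' = i → b = (ψ j).pos i) := by
  simp only [adjC, (ψ j).inj.eq_iff]
  constructor
  · rintro (⟨rfl, hb⟩ | ⟨i'', hne, rfl⟩) hi
    exacts [hb, absurd hi hne]
  · intro h
    rcases eq_or_ne i i' with rfl | hne
    · exact Or.inl ⟨rfl, h rfl⟩
    · exact Or.inr ⟨i', hne.symm, rfl⟩

theorem skeletonOf_adj_iff (τ : Var → Bool) (f : Fin m → Fin 3) :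
    (∀ k k', adjX ψ k k' → adjC ψ (skeletonOf τ f k) (skeletonOf τ f k')) ↔
      ∀ j, τ ((ψ j).var (f j)) = (ψ j).pos (f j) := by
  constructor
  · intro hadj j
    exact (adjC_var_clause_iff ψ j (f j) (f j) _).1
      (hadj (Sum.inl ((ψ j).var (f j))) (Sum.inr j) ⟨f j, rfl⟩) rfl
  · intro hsat
    have hvar_clause : ∀ j i, adjC ψ (skeletonOf τ f (Sum.inl ((ψ j).var i)))
        (skeletonOf τ f (Sum.inr j)) := fun j i =>
      (adjC_var_clause_iff ψ j (f j) i _).2 fun hi => hi ▸ hsat j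
    rintro (x | j) (x' | j') ⟨i, rfl⟩
    · exact hvar_clause j' i
    · exact (adjC_comm ψ _ _).1 (hvar_clause j i)

/-- A 3-CNF formula `ψ` is satisfiable if and only if one can choose exactly one cell
from each cluster such that the chosen cells of any two clusters adjacent in `G_x`
are adjacent in `G_c` (i.e., the subgraph of `G_c` induced by the chosen cells is
isomorphic to `G_x` via the cell-to-cluster map). -/
theorem threeSat_iff_skeleton :
    (∃ τ : Var → Bool, ∀ j : Fin m, (ψ j).Sat τ) ↔
    (∃ s : Cluster Var m → Cell Var m,
      (∀ k, clusterOf (s k) = k) ∧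
      (∀ k k', adjX ψ k k' → adjC ψ (s k) (s k'))) := by
  constructor
  · rintro ⟨τ, hτ⟩
    choose f hf using hτ
    exact ⟨skeletonOf τ f, clusterOf_skeletonOf τ f, (skeletonOf_adj_iff ψ τ f).2 hf⟩
  · rintro ⟨s, hs, hadj⟩
    obtain ⟨τ, f, rfl⟩ := exists_eq_skeletonOf hs
    exact ⟨τ, fun j => ⟨f j, (skeletonOf_adj_iff ψ τ f).1 hadj j⟩⟩

end
end

section
/- Let C(u_1), …, C(u_λ) be pairwise disjoint finite clusters and G_c a graph with edges only between consecutive clusters (path structure). Perform forward propagation marking active cells as in the path algorithm, then delete all non-active cells, then perform backward propagation from C(u_λ) to C(u_1) on the remaining graph and delete all cells not active in the backward pass. Then a cell a ∈ C(u_i) survives both passes if and only if there exists a skeleton of G_c (a transversal with consecutive chosen cells adjacent) containing a. -/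
/-!
A cell that is active in the forward pass ends a path through the clusters `0, …, cl a`
(follow the witnesses of activity back to the first cluster); a cell that also survives the
backward pass starts a path through `cl a, …, n`. Gluing the two paths at `a` gives a
skeleton. Conversely, along a skeleton every cell is forward-active, by induction from the
first cluster, and then backward-active, by induction from the last one.
-/

namespace ClusterPath

variable {ι : Type*} {n : ℕ} (cl : ι → Fin (n + 1)) (adj : ι → ι → Prop)

def IsForwardPass (fwd : ι → Prop) : Prop :=
  ∀ a, fwd a ↔ ((cl a).val = 0 ∨ ∃ b, adj b a ∧ (cl b).val + 1 = (cl a).val ∧ fwd b)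

def IsBackwardPass (fwd bwd : ι → Prop) : Prop :=
  ∀ a, bwd a ↔
    (fwd a ∧ ((cl a).val = n ∨ ∃ b, adj a b ∧ (cl b).val = (cl a).val + 1 ∧ bwd b))

/-- A skeleton of the clusters `lo, …, hi`, indexed by `ℕ` (values outside `[lo, hi]` are
irrelevant) to avoid `Fin` arithmetic. -/
def IsSkeletonOn (s : ℕ → ι) (lo hi : ℕ) : Prop :=
  (∀ i, lo ≤ i → i ≤ hi → (cl (s i) : ℕ) = i) ∧
    ∀ i, lo ≤ i → i < hi → adj (s i) (s (i + 1))

variable {cl adj}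

theorem isSkeletonOn_const {a : ι} {i : ℕ} (ha : (cl a : ℕ) = i) :
    IsSkeletonOn cl adj (fun _ => a) i i :=
  ⟨fun _ h₁ h₂ => by rw [ha, le_antisymm h₂ h₁], fun _ h₁ h₂ => by omega⟩

theorem isSkeletonOn_pair {a b : ι} (hab : adj a b) (hb : (cl b : ℕ) = cl a + 1) :
    IsSkeletonOn cl adj (fun i => if i ≤ cl a then a else b) (cl a) (cl b) := by
  refine ⟨fun i h₁ h₂ => ?_, fun i h₁ h₂ => ?_⟩ <;> dsimp only
  · split_ifs <;> omega
  · rwa [if_pos (by omega), if_neg (by omega)]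

theorem IsSkeletonOn.glue {s t : ℕ → ι} {lo m hi : ℕ} (hs : IsSkeletonOn cl adj s lo m)
    (ht : IsSkeletonOn cl adj t m hi) (hst : s m = t m) :
    IsSkeletonOn cl adj (fun i => if i ≤ m then s i else t i) lo hi := by
  refine ⟨fun i h₁ h₂ => ?_, fun i h₁ h₂ => ?_⟩ <;> dsimp only
  · split_ifs with h
    · exact hs.1 i h₁ h
    · exact ht.1 i (by omega) h₂
  · by_cases h : i + 1 ≤ m
    · rw [if_pos (by omega), if_pos h]
      exact hs.2 i h₁ h
    · rw [if_neg h]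
      have hti := ht.2 i (by omega) h₂
      by_cases him : i ≤ m
      · obtain rfl : i = m := by omega
        rwa [if_pos him, hst]
      · rwa [if_neg him]

variable {fwd bwd : ι → Prop}

theorem exists_isSkeletonOn_of_fwd
    (hfwd : IsForwardPass cl adj fwd)
    {a : ι} (ha : fwd a) : ∃ s, IsSkeletonOn cl adj s 0 (cl a) ∧ s (cl a) = a := by
  induction hk : (cl a : ℕ) generalizing a with
  | zero => exact ⟨fun _ => a, isSkeletonOn_const hk, rfl⟩
  | succ k ih =>
    obtain h0 | ⟨b, hba, hb, hfb⟩ := (hfwd a).1 ha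
    · omega
    have hbk : (cl b : ℕ) = k := by omega
    obtain ⟨s, hs, hsb⟩ := ih hfb hbk
    rw [← hbk] at hs hsb
    have hglue := hs.glue (isSkeletonOn_pair hba hb.symm) (by rw [if_pos le_rfl, hsb])
    rw [← hk]
    exact ⟨_, hglue, by rw [if_neg (by omega), if_neg (by omega)]⟩

theorem exists_isSkeletonOn_of_bwd
    (hbwd : IsBackwardPass cl adj fwd bwd)
    {a : ι} (ha : bwd a) : ∃ t, IsSkeletonOn cl adj t (cl a) n ∧ t (cl a) = a := by
  induction hk : n - (cl a : ℕ) generalizing a with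
  | zero =>
    have : (cl a : ℕ) = n := by have := (cl a).isLt; omega
    rw [this]
    exact ⟨fun _ => a, isSkeletonOn_const this, rfl⟩
  | succ k ih =>
    obtain ⟨-, hn | ⟨b, hab, hb, hbb⟩⟩ := (hbwd a).1 ha
    · omega
    obtain ⟨t, ht, htb⟩ := ih hbb (by omega)
    refine ⟨_, (isSkeletonOn_pair hab hb).glue ht (by rw [if_neg (by omega), htb]), ?_⟩
    rw [if_pos (by omega), if_pos le_rfl]

theorem IsSkeletonOn.forward_active
    (hfwd : IsForwardPass cl adj fwd)
    {s : ℕ → ι} {hi : ℕ} (hs : IsSkeletonOn cl adj s 0 hi) :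
    ∀ i ≤ hi, fwd (s i) := by
  intro i
  induction i with
  | zero => exact fun h => (hfwd _).2 (Or.inl (hs.1 0 le_rfl h))
  | succ k ih =>
    intro h
    refine (hfwd _).2 (Or.inr ⟨s k, hs.2 k (Nat.zero_le _) h, ?_, ih (by omega)⟩)
    rw [hs.1 k (Nat.zero_le _) (by omega), hs.1 (k + 1) (Nat.zero_le _) h]

theorem IsSkeletonOn.backward_active
    (hfwd : IsForwardPass cl adj fwd)
    (hbwd : IsBackwardPass cl adj fwd bwd)
    {s : ℕ → ι} (hs : IsSkeletonOn cl adj s 0 n) {i : ℕ} (hi : i ≤ n) : bwd (s i) := by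
  suffices ∀ k ≤ n, bwd (s (n - k)) by simpa [Nat.sub_sub_self hi] using this (n - i) (by omega)
  intro k
  induction k with
  | zero =>
    exact fun _ => (hbwd _).2
      ⟨hs.forward_active hfwd n le_rfl, Or.inl (hs.1 n (Nat.zero_le _) le_rfl)⟩
  | succ k ih =>
    intro hk
    have hnext : n - (k + 1) + 1 = n - k := by omega
    refine (hbwd _).2
      ⟨hs.forward_active hfwd _ (by omega), Or.inr ⟨s (n - k), ?_, ?_, ih (by omega)⟩⟩
    · simpa [hnext] using hs.2 (n - (k + 1)) (Nat.zero_le _) (by omega)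
    · rw [hs.1 _ (Nat.zero_le _) (by omega), hs.1 _ (Nat.zero_le _) (by omega)]
      omega

theorem exists_fin_skeleton_iff (a : ι) :
    (∃ s : Fin (n + 1) → ι, (∀ i, cl (s i) = i) ∧ s (cl a) = a ∧
        ∀ i : Fin n, adj (s i.castSucc) (s i.succ)) ↔
      ∃ s : ℕ → ι, IsSkeletonOn cl adj s 0 n ∧ s (cl a) = a := by
  constructor
  · rintro ⟨s, hcl, hsa, hadj⟩
    refine ⟨fun k => s ⟨min k n, by omega⟩, ⟨fun i _ hi => ?_, fun i _ hi => ?_⟩, ?_⟩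
    · simp [hcl, min_eq_left hi]
    · convert hadj ⟨i, hi⟩ using 2 <;> ext <;> simp <;> omega
    · convert hsa using 3
      simp [(Nat.lt_succ_iff.mp (cl a).isLt)]
  · rintro ⟨s, hs, hsa⟩
    exact ⟨fun i => s i, fun i => Fin.ext (hs.1 i (Nat.zero_le _) (Nat.lt_succ_iff.mp i.isLt)),
      hsa, fun i => hs.2 i (Nat.zero_le _) i.isLt⟩

end ClusterPath

open ClusterPath in
/-- The clusters `C(u_1), …, C(u_λ)` are the fibres of `cl`, so `λ = n + 1`; `bwd` is the
backward pass run on the cells that survive the forward pass `fwd`. -/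
theorem survives_both_passes_iff_in_skeleton_general
    {ι : Type*} {n : ℕ} (cl : ι → Fin (n + 1)) (adj : ι → ι → Prop)
    (fwd bwd : ι → Prop)
    (hfwd : ∀ a, fwd a ↔
      ((cl a).val = 0 ∨ ∃ b, adj b a ∧ (cl b).val + 1 = (cl a).val ∧ fwd b))
    (hbwd : ∀ a, bwd a ↔ (fwd a ∧
      ((cl a).val = n ∨ ∃ b, adj a b ∧ (cl b).val = (cl a).val + 1 ∧ bwd b))) :
    ∀ a : ι, bwd a ↔
      (∃ s : Fin (n + 1) → ι, (∀ i, cl (s i) = i) ∧ s (cl a) = a ∧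
        ∀ i : Fin n, adj (s i.castSucc) (s i.succ)) := by
  intro a
  rw [exists_fin_skeleton_iff]
  constructor
  · intro hb
    obtain ⟨s, hs, hsa⟩ := exists_isSkeletonOn_of_fwd hfwd ((hbwd a).1 hb).1
    obtain ⟨t, ht, hta⟩ := exists_isSkeletonOn_of_bwd hbwd hb
    exact ⟨_, hs.glue ht (hsa.trans hta.symm), by simp [hsa]⟩
  · rintro ⟨s, hs, hsa⟩
    rw [← hsa]
    exact hs.backward_active hfwd hbwd (Nat.lt_succ_iff.mp (cl a).isLt)

/-- Forward/backward propagation on a path of clusters. Clusters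
`C(u_1), …, C(u_λ)` (here `λ = n + 1`) are modelled by a cell type `ι` with cluster
map `cl : ι → Fin (n+1)`; the cell graph `adj` is symmetric and joins only cells of
consecutive clusters. `fwd` is the forward-propagation activity predicate (all cells
of the first cluster are active; a cell of a later cluster is active iff adjacent to
an active cell of the previous cluster). `bwd` is the backward-propagation activity
predicate computed on the graph with the non-`fwd` cells deleted (all remaining
cells of the last cluster are active; a remaining cell is active iff adjacent to an
active remaining cell of the next cluster). Then a cell `a` survives both passes
(i.e., satisfies `bwd`) iff there is a skeleton of `G_c` containing `a`. -/
theorem survives_both_passes_iff_in_skeleton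
    {ι : Type*} {n : ℕ} (cl : ι → Fin (n + 1)) (adj : ι → ι → Prop)
    (hsymm : ∀ a b, adj a b → adj b a)
    (hconsec : ∀ a b, adj a b → (cl b).val = (cl a).val + 1 ∨ (cl a).val = (cl b).val + 1)
    (fwd bwd : ι → Prop)
    (hfwd : ∀ a, fwd a ↔
      ((cl a).val = 0 ∨ ∃ b, adj b a ∧ (cl b).val + 1 = (cl a).val ∧ fwd b))
    (hbwd : ∀ a, bwd a ↔ (fwd a ∧
      ((cl a).val = n ∨ ∃ b, adj a b ∧ (cl b).val = (cl a).val + 1 ∧ bwd b))) :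
    ∀ a : ι, bwd a ↔
      (∃ s : Fin (n + 1) → ι, (∀ i, cl (s i) = i) ∧ s (cl a) = a ∧
        ∀ i : Fin n, adj (s i.castSucc) (s i.succ)) :=
  survives_both_passes_iff_in_skeleton_general cl adj fwd bwd hfwd hbwd
end
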